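/- Conservation law for the Ochrombel model on a co-evolving network: let m ∈ L^∞(μ∞), m ≥ 0, satisfy the adjoint eigenfunction equation (½Γ_B(c) + χΓ_P(c))·m(c) = ½ T_B* m(c) + χ T_P* m(c) for μ∞-a.e. c. Then for every h ∈ L¹(μ∞), ∫₀^∞ m(c)·[½(T_B h(c) − Γ_B(c)h(c)) + χ(T_P h(c) − Γ_P(c)h(c))] dμ∞(c) = 0. (Hence, along solutions p̃ of the co-evolving linear scattering equation with g = g∞, the quantity ρ_g = ∫ m p̃(·,t) dμ∞ is constant in time, and the asymptotic stationary equilibrium is p̃^∞ ≡ ρ_g with ρ_g = ∫ m(c) p̃(c,0) dμ∞(c).) -/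

import Mathlib

/-!
Passing to the finite measure `μ = g∞ dc` on `(0,∞)`, every operator becomes an integral against
`μ`. For bounded kernels and bounded `m`, the integrand `m(c) K(c,c₁) h(c₁)` is integrable on
`μ ⊗ μ`, so Fubini gives `∫ m · T_K h dμ = ∫ (T_K* m) · h dμ`. Hence the pairing of `m` with the
generator `T_K h − Γ_K h` equals the pairing of `T_K* m − Γ_K m` with `h`, and the adjoint
eigenfunction equation makes the combined right-hand side vanish pointwise.
-/

open MeasureTheory Set

/-- The finite measure on `(0,∞)` with density `g` with respect to Lebesgue measure. -/
noncomputable def netMeasure (g : ℝ → ℝ) : Measure ℝ :=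
  (volume.restrict (Ioi (0:ℝ))).withDensity (fun c => ENNReal.ofReal (g c))

/-- `Γ_B(c) := ∫₀^∞ B(c,c₁) g(c₁) dc₁` (also used for `Γ_P` with kernel `Q`). -/
noncomputable def GamB (B : ℝ → ℝ → ℝ) (g : ℝ → ℝ) (c : ℝ) : ℝ :=
  ∫ c₁ in Ioi (0:ℝ), B c c₁ * g c₁

/-- `T_B h(c) := ∫₀^∞ B(c,c₁) h(c₁) g(c₁) dc₁` (also used for `T_P` with kernel `Q`). -/
noncomputable def TB (B : ℝ → ℝ → ℝ) (g : ℝ → ℝ) (h : ℝ → ℝ) (c : ℝ) : ℝ :=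
  ∫ c₁ in Ioi (0:ℝ), B c c₁ * h c₁ * g c₁

/-- `T_B* m(c) := ∫₀^∞ B(c₁,c) m(c₁) g(c₁) dc₁` (also used for `T_P*` with kernel `Q`). -/
noncomputable def TBstar (B : ℝ → ℝ → ℝ) (g : ℝ → ℝ) (m : ℝ → ℝ) (c : ℝ) : ℝ :=
  ∫ c₁ in Ioi (0:ℝ), B c₁ c * m c₁ * g c₁

section KernelDuality

variable {α : Type*} [MeasurableSpace α] {μ : Measure α}

lemma integral_const_mul_add_const_mul {f₁ f₂ : α → ℝ} (hf₁ : Integrable f₁ μ)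
    (hf₂ : Integrable f₂ μ) (a b : ℝ) :
    ∫ x, (a * f₁ x + b * f₂ x) ∂μ = a * ∫ x, f₁ x ∂μ + b * ∫ x, f₂ x ∂μ := by
  rw [integral_add (hf₁.const_mul a) (hf₂.const_mul b), integral_const_mul, integral_const_mul]

variable [IsFiniteMeasure μ] {K : α → α → ℝ} {m h : α → ℝ} {C Cm : ℝ}
  (hK : AEStronglyMeasurable (fun p : α × α => K p.1 p.2) (μ.prod μ))
  (hKC : ∀ᵐ p ∂μ.prod μ, |K p.1 p.2| ≤ C)
  (hm : AEStronglyMeasurable m μ) (hmC : ∀ᵐ c ∂μ, |m c| ≤ Cm) (hh : Integrable h μ)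
include hK hKC hm hmC hh

lemma integrable_prod_mul_kernel_mul :
    Integrable (fun p : α × α => m p.1 * K p.1 p.2 * h p.2) (μ.prod μ) := by
  refine (hh.comp_snd μ).bdd_mul (c := Cm * C) (hm.comp_fst.mul hK) ?_
  filter_upwards [Measure.quasiMeasurePreserving_fst.ae hmC, hKC] with p hmp hKp
  rw [Real.norm_eq_abs, abs_mul]
  exact mul_le_mul hmp hKp (abs_nonneg _) ((abs_nonneg _).trans hmp)

lemma integrable_prod_kernel_mul_mul :
    Integrable (fun p : α × α => K p.1 p.2 * (m p.1 * h p.1)) (μ.prod μ) := by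
  have hmh : Integrable (fun c => m c * h c) μ :=
    hh.bdd_mul hm (hmC.mono fun c hc => by rwa [Real.norm_eq_abs])
  exact (hmh.comp_fst μ).bdd_mul hK (hKC.mono fun p hp => by rwa [Real.norm_eq_abs])

lemma integrable_mul_integral_kernel_mul :
    Integrable (fun c => m c * ∫ c₁, K c c₁ * h c₁ ∂μ) μ := by
  refine (integrable_prod_mul_kernel_mul hK hKC hm hmC hh).integral_prod_left.congr
    (.of_forall fun c => ?_)
  simp only [mul_assoc, integral_const_mul]

lemma integrable_integral_kernel_swap_mul_mul :
    Integrable (fun c => (∫ c₁, K c₁ c * m c₁ ∂μ) * h c) μ := by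
  refine (integrable_prod_mul_kernel_mul hK hKC hm hmC hh).integral_prod_right.congr
    (.of_forall fun c => ?_)
  simp only [← integral_mul_const, mul_comm (m _)]

lemma integrable_integral_kernel_mul_mul :
    Integrable (fun c => (∫ c₁, K c c₁ ∂μ) * (m c * h c)) μ :=
  (integrable_prod_kernel_mul_mul hK hKC hm hmC hh).integral_prod_left.congr
    (.of_forall fun c => by simp only [integral_mul_const])

lemma integral_mul_integral_kernel_mul_eq_swap :
    ∫ c, m c * ∫ c₁, K c c₁ * h c₁ ∂μ ∂μ = ∫ c, (∫ c₁, K c₁ c * m c₁ ∂μ) * h c ∂μ := by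
  calc ∫ c, m c * ∫ c₁, K c c₁ * h c₁ ∂μ ∂μ
      = ∫ c, ∫ c₁, m c * K c c₁ * h c₁ ∂μ ∂μ := by simp only [mul_assoc, integral_const_mul]
    _ = ∫ c₁, ∫ c, m c * K c c₁ * h c₁ ∂μ ∂μ :=
      integral_integral_swap (integrable_prod_mul_kernel_mul hK hKC hm hmC hh)
    _ = ∫ c, (∫ c₁, K c₁ c * m c₁ ∂μ) * h c ∂μ := by
      simp only [← integral_mul_const, mul_comm (m _)]

lemma integrable_mul_kernel_generator :
    Integrable (fun c => m c * ((∫ c₁, K c c₁ * h c₁ ∂μ) - (∫ c₁, K c c₁ ∂μ) * h c)) μ := by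
  refine ((integrable_mul_integral_kernel_mul hK hKC hm hmC hh).sub
    (integrable_integral_kernel_mul_mul hK hKC hm hmC hh)).congr (.of_forall fun c => ?_)
  simp only [Pi.sub_apply]
  ring

lemma integrable_kernel_adjoint_generator_mul :
    Integrable (fun c => ((∫ c₁, K c₁ c * m c₁ ∂μ) - (∫ c₁, K c c₁ ∂μ) * m c) * h c) μ := by
  refine ((integrable_integral_kernel_swap_mul_mul hK hKC hm hmC hh).sub
    (integrable_integral_kernel_mul_mul hK hKC hm hmC hh)).congr (.of_forall fun c => ?_)
  simp only [Pi.sub_apply]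
  ring

lemma integral_mul_kernel_generator :
    ∫ c, m c * ((∫ c₁, K c c₁ * h c₁ ∂μ) - (∫ c₁, K c c₁ ∂μ) * h c) ∂μ
      = ∫ c, ((∫ c₁, K c₁ c * m c₁ ∂μ) - (∫ c₁, K c c₁ ∂μ) * m c) * h c ∂μ := by
  have hΓ := integrable_integral_kernel_mul_mul hK hKC hm hmC hh
  simp only [mul_sub, sub_mul, mul_left_comm (m _), mul_assoc]
  rw [integral_sub (integrable_mul_integral_kernel_mul hK hKC hm hmC hh) hΓ,
    integral_sub (integrable_integral_kernel_swap_mul_mul hK hKC hm hmC hh) hΓ,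
    integral_mul_integral_kernel_mul_eq_swap hK hKC hm hmC hh]

end KernelDuality

theorem integral_mul_generator_eq_zero_of_adjoint_eigen {α : Type*} [MeasurableSpace α]
    {μ : Measure α} [IsFiniteMeasure μ] {B Q : α → α → ℝ} {m h : α → ℝ} {CB CQ Cm : ℝ}
    (a b : ℝ)
    (hB : AEStronglyMeasurable (fun p : α × α => B p.1 p.2) (μ.prod μ))
    (hBC : ∀ᵐ p ∂μ.prod μ, |B p.1 p.2| ≤ CB)
    (hQ : AEStronglyMeasurable (fun p : α × α => Q p.1 p.2) (μ.prod μ))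
    (hQC : ∀ᵐ p ∂μ.prod μ, |Q p.1 p.2| ≤ CQ)
    (hm : AEStronglyMeasurable m μ) (hmC : ∀ᵐ c ∂μ, |m c| ≤ Cm)
    (hm_eig : ∀ᵐ c ∂μ, (a * ∫ c₁, B c c₁ ∂μ + b * ∫ c₁, Q c c₁ ∂μ) * m c
      = a * ∫ c₁, B c₁ c * m c₁ ∂μ + b * ∫ c₁, Q c₁ c * m c₁ ∂μ)
    (hh : Integrable h μ) :
    ∫ c, m c * (a * ((∫ c₁, B c c₁ * h c₁ ∂μ) - (∫ c₁, B c c₁ ∂μ) * h c)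
      + b * ((∫ c₁, Q c c₁ * h c₁ ∂μ) - (∫ c₁, Q c c₁ ∂μ) * h c)) ∂μ = 0 := by
  simp only [mul_add, mul_left_comm (m _) a, mul_left_comm (m _) b]
  rw [integral_const_mul_add_const_mul (integrable_mul_kernel_generator hB hBC hm hmC hh)
      (integrable_mul_kernel_generator hQ hQC hm hmC hh),
    integral_mul_kernel_generator hB hBC hm hmC hh, integral_mul_kernel_generator hQ hQC hm hmC hh,
    ← integral_const_mul_add_const_mul (integrable_kernel_adjoint_generator_mul hB hBC hm hmC hh)
      (integrable_kernel_adjoint_generator_mul hQ hQC hm hmC hh)]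
  refine integral_eq_zero_of_ae (hm_eig.mono fun c hc => ?_)
  simp only [Pi.zero_apply]
  linear_combination (-h c) * hc

lemma integral_netMeasure {g : ℝ → ℝ} (hg : Measurable g) (hg0 : ∀ c, 0 ≤ g c) (f : ℝ → ℝ) :
    ∫ x, f x ∂netMeasure g = ∫ x in Ioi (0:ℝ), f x * g x := by
  rw [netMeasure, integral_withDensity_eq_integral_toReal_smul hg.ennreal_ofReal
    (.of_forall fun _ => ENNReal.ofReal_lt_top)]
  simp only [ENNReal.toReal_ofReal (hg0 _), smul_eq_mul, mul_comm (g _)]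

theorem coevolving_scattering_conservation_general
    (ginf : ℝ → ℝ) (hg_meas : Measurable ginf) (hg_nonneg : ∀ c, 0 ≤ ginf c)
    (hg_prob : ∫ c in Ioi (0:ℝ), ginf c = 1)
    (B : ℝ → ℝ → ℝ) (hB_meas : Measurable (fun x : ℝ × ℝ => B x.1 x.2))
    (hB_bdd : ∃ C : ℝ, ∀ᵐ x ∂((netMeasure ginf).prod (netMeasure ginf)), |B x.1 x.2| ≤ C)
    (Q : ℝ → ℝ → ℝ) (hQ_meas : Measurable (fun x : ℝ × ℝ => Q x.1 x.2))
    (hQ_bdd : ∃ C : ℝ, ∀ᵐ x ∂((netMeasure ginf).prod (netMeasure ginf)), |Q x.1 x.2| ≤ C)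
    (χ : ℝ)
    (m : ℝ → ℝ) (hm_meas : Measurable m)
    (hm_bdd : ∃ C : ℝ, ∀ᵐ c ∂(netMeasure ginf), |m c| ≤ C)
    (hm_eig : ∀ᵐ c ∂(netMeasure ginf),
      ((1/2) * GamB B ginf c + χ * GamB Q ginf c) * m c
        = (1/2) * TBstar B ginf m c + χ * TBstar Q ginf m c) :
    ∀ h : ℝ → ℝ, Integrable h (netMeasure ginf) →
      ∫ c, m c * ((1/2) * (TB B ginf h c - GamB B ginf c * h c)
        + χ * (TB Q ginf h c - GamB Q ginf c * h c)) ∂(netMeasure ginf) = 0 := by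
  intro h hh
  obtain ⟨CB, hBC⟩ := hB_bdd
  obtain ⟨CQ, hQC⟩ := hQ_bdd
  obtain ⟨Cm, hmC⟩ := hm_bdd
  have : IsFiniteMeasure (netMeasure ginf) := isFiniteMeasure_withDensity_ofReal
    (Integrable.of_integral_ne_zero (hg_prob ▸ one_ne_zero)).2
  simp only [TB, GamB, TBstar, ← integral_netMeasure hg_meas hg_nonneg] at hm_eig ⊢
  exact integral_mul_generator_eq_zero_of_adjoint_eigen _ _ hB_meas.aestronglyMeasurable hBC
    hQ_meas.aestronglyMeasurable hQC hm_meas.aestronglyMeasurable hmC hm_eig hh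

/-- Conservation law for the Ochrombel model on a co-evolving network: if `m` satisfies the
adjoint eigenfunction equation `(½Γ_B + χΓ_P) m = ½T_B* m + χT_P* m` μ∞-a.e., then the
quantity `∫ m [½(T_B h − Γ_B h) + χ(T_P h − Γ_P h)] dμ∞` vanishes for every `h ∈ L¹(μ∞)`. -/
theorem coevolving_scattering_conservation
    (ginf : ℝ → ℝ) (hg_meas : Measurable ginf) (hg_nonneg : ∀ c, 0 ≤ ginf c)
    (hg_prob : ∫ c in Ioi (0:ℝ), ginf c = 1)
    (B : ℝ → ℝ → ℝ) (hB_meas : Measurable (fun x : ℝ × ℝ => B x.1 x.2))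
    (hB_pos : ∀ᵐ x ∂((netMeasure ginf).prod (netMeasure ginf)), 0 < B x.1 x.2)
    (hB_bdd : ∃ C : ℝ, ∀ᵐ x ∂((netMeasure ginf).prod (netMeasure ginf)), |B x.1 x.2| ≤ C)
    (Q : ℝ → ℝ → ℝ) (hQ_meas : Measurable (fun x : ℝ × ℝ => Q x.1 x.2))
    (hQ_pos : ∀ᵐ x ∂((netMeasure ginf).prod (netMeasure ginf)), 0 < Q x.1 x.2)
    (hQ_bdd : ∃ C : ℝ, ∀ᵐ x ∂((netMeasure ginf).prod (netMeasure ginf)), |Q x.1 x.2| ≤ C)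
    (χ : ℝ) (hχ : 0 < χ)
    (m : ℝ → ℝ) (hm_meas : Measurable m)
    (hm_bdd : ∃ C : ℝ, ∀ᵐ c ∂(netMeasure ginf), |m c| ≤ C)
    (hm_nonneg : 0 ≤ᵐ[netMeasure ginf] m)
    (hm_eig : ∀ᵐ c ∂(netMeasure ginf),
      ((1/2) * GamB B ginf c + χ * GamB Q ginf c) * m c
        = (1/2) * TBstar B ginf m c + χ * TBstar Q ginf m c) :
    ∀ h : ℝ → ℝ, Integrable h (netMeasure ginf) →
      ∫ c, m c * ((1/2) * (TB B ginf h c - GamB B ginf c * h c)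
        + χ * (TB Q ginf h c - GamB Q ginf c * h c)) ∂(netMeasure ginf) = 0 :=
  coevolving_scattering_conservation_general ginf hg_meas hg_nonneg hg_prob B hB_meas hB_bdd Q
    hQ_meas hQ_bdd χ m hm_meas hm_bdd hm_eig
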